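/- Let 0<x<1 be real, s∈ℂ with Re(s)>0, r∈ℂ, r* := r−1, and assume [1]_s ≠ 0, [r]_s ≠ 0 and [r*]_s ≠ 0. Define F(u) := [u+1]_s[u+r*]_s/([u]_s[u+r]_s). Although F(u) and F(−u) each have a simple pole at u=0 (coming from the simple zero of [u]_s at u=0), their sum u ↦ F(u) + F(−u) has a removable singularity at u=0, i.e. it extends to a holomorphic function on a neighbourhood of 0. -/

import Mathlib

/-!
Factor `[u]_s = (1 - x^{2u}) Φ(u)` (`Φ = jThetaCofactor`) by splitting off the `j = 0` factor
of `(x^{2u};x^{2s})_∞`; `Φ` is entire with `Φ(0) = 1`, so `[·]_s` has a simple zero at `0` with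
derivative `-2 log x`. As `[r]_s ≠ 0`, the denominator `D(u) = [u]_s [u+r]_s` has a simple zero
too, `D(u) = u ψ(u)` with `ψ(0) ≠ 0`. Writing `A(u) = [u+1]_s [u+r*]_s`,
`F(u) + F(-u) = (A(u) ψ(-u) - A(-u) ψ(u)) / (u ψ(u) ψ(-u))`, and the numerator vanishes at `0`.
-/

open Complex

/-- `x^w := exp(w · log x)` for real `x` and complex `w`. -/
noncomputable def xpow (x : ℝ) (w : ℂ) : ℂ := Complex.exp (w * (Real.log x : ℂ))

/-- The infinite `q`-Pochhammer product `(z;q)_∞ = ∏_{j=0}^∞ (1 − q^j z)`. -/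
noncomputable def qPoch (z q : ℂ) : ℂ := ∏' j : ℕ, (1 - q ^ j * z)

/-- `Θ_q(z) = (z;q)_∞ (q z⁻¹;q)_∞ (q;q)_∞`. -/
noncomputable def jacTheta0 (q z : ℂ) : ℂ := qPoch z q * qPoch (q * z⁻¹) q * qPoch q q

/-- The Jacobi theta function `[u]_r = x^{u²/r − u} Θ_{x^{2r}}(x^{2u}) / ((x^{2r};x^{2r})_∞)³`. -/
noncomputable def jTheta (x : ℝ) (r u : ℂ) : ℂ :=
  xpow x (u ^ 2 / r - u) * jacTheta0 (xpow x (2 * r)) (xpow x (2 * u)) /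
    (qPoch (xpow x (2 * r)) (xpow x (2 * r))) ^ 3

open Filter Topology

section Analytic

variable {𝕜 : Type*} [NontriviallyNormedField 𝕜]

lemma AnalyticAt.exists_eq_mul_of_eq_zero {f : 𝕜 → 𝕜} (hf : AnalyticAt 𝕜 f 0) (h₀ : f 0 = 0) :
    ∃ φ : 𝕜 → 𝕜, AnalyticAt 𝕜 φ 0 ∧ φ 0 = deriv f 0 ∧ ∀ u, f u = u * φ u := by
  obtain ⟨p, hp⟩ := hf
  exact ⟨dslope f 0, ⟨p.fslope, hp.has_fpower_series_dslope_fslope⟩, dslope_same f 0,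
    fun u => by simpa [h₀] using (sub_smul_dslope f 0 u).symm⟩

lemma exists_analyticAt_eventuallyEq_div_add_div_neg {A D : 𝕜 → 𝕜} (hA : AnalyticAt 𝕜 A 0)
    (hD : AnalyticAt 𝕜 D 0) (hD₀ : D 0 = 0) (hD' : deriv D 0 ≠ 0) :
    ∃ g : 𝕜 → 𝕜, AnalyticAt 𝕜 g 0 ∧ ∀ᶠ u in 𝓝[≠] 0, g u = A u / D u + A (-u) / D (-u) := by
  obtain ⟨ψ, hψ, hψ₀, hDψ⟩ := hD.exists_eq_mul_of_eq_zero hD₀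
  rw [← hψ₀] at hD'
  have hψneg : AnalyticAt 𝕜 (fun u => ψ (-u)) 0 := hψ.comp_of_eq analyticAt_id.neg neg_zero
  have hAneg : AnalyticAt 𝕜 (fun u => A (-u)) 0 := hA.comp_of_eq analyticAt_id.neg neg_zero
  obtain ⟨γ, hγ, -, hGγ⟩ := ((hA.fun_mul hψneg).fun_sub (hAneg.fun_mul hψ)).exists_eq_mul_of_eq_zero
    (by simp)
  refine ⟨fun u => γ u / (ψ u * ψ (-u)), hγ.div (hψ.mul hψneg) (by simpa using hD'), ?_⟩
  have hne : ∀ᶠ u in 𝓝 0, ψ u ≠ 0 ∧ ψ (-u) ≠ 0 :=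
    (hψ.continuousAt.eventually_ne hD').and (hψneg.continuousAt.eventually_ne (by simpa using hD'))
  filter_upwards [self_mem_nhdsWithin, nhdsWithin_le_nhds hne] with u (hu : u ≠ 0) ⟨h₁, h₂⟩
  rw [hDψ u, hDψ (-u)]
  field_simp
  linear_combination -hGγ u

lemma AnalyticAt.exists_isOpen_differentiableOn_eq {E : Type*} [NormedAddCommGroup E]
    [NormedSpace 𝕜 E] [CompleteSpace E] {g F : 𝕜 → E} {c : 𝕜} (hg : AnalyticAt 𝕜 g c)
    (hgF : ∀ᶠ u in 𝓝[≠] c, g u = F u) :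
    ∃ U, IsOpen U ∧ c ∈ U ∧ DifferentiableOn 𝕜 g U ∧ ∀ u ∈ U, u ≠ c → g u = F u := by
  obtain ⟨U, hU, hUo, hcU⟩ :=
    eventually_nhds_iff.1 (hg.eventually_analyticAt.and (eventually_nhdsWithin_iff.1 hgF))
  exact ⟨U, hUo, hcU, fun u hu => (hU u hu).1.differentiableAt.differentiableWithinAt,
    fun u hu => (hU u hu).2⟩

end Analytic

section QPochhammer

variable {q : ℂ}

lemma summable_norm_pow_mul (hq : ‖q‖ < 1) (z : ℂ) : Summable fun j : ℕ => ‖q ^ j * z‖ := by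
  simpa [norm_mul, norm_pow] using
    (summable_geometric_of_lt_one (norm_nonneg q) hq).mul_right ‖z‖

lemma multipliable_qPoch (hq : ‖q‖ < 1) (z : ℂ) : Multipliable fun j : ℕ => 1 - q ^ j * z := by
  simp_rw [sub_eq_add_neg]
  exact multipliable_one_add_of_summable (by simpa using summable_norm_pow_mul hq z)

lemma qPoch_eq_one_sub_mul (hq : ‖q‖ < 1) (z : ℂ) : qPoch z q = (1 - z) * qPoch (q * z) q := by
  have hshift : (fun j : ℕ => 1 - q ^ (j + 1) * z) = fun j => 1 - q ^ j * (q * z) := by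
    ext j; ring
  unfold qPoch
  rw [tprod_eq_zero_mul' (hshift ▸ multipliable_qPoch hq (q * z)), hshift, pow_zero, one_mul]

lemma qPoch_ne_zero (hq : ‖q‖ < 1) {z : ℂ} (hz : ‖z‖ < 1) : qPoch z q ≠ 0 := by
  simp_rw [qPoch, sub_eq_add_neg]
  refine tprod_one_add_ne_zero_of_summable (fun j => ?_) (by simpa using summable_norm_pow_mul hq z)
  rw [← sub_eq_add_neg, sub_ne_zero]
  refine fun h => (?_ : ‖q ^ j * z‖ < 1).ne (by rw [← h, norm_one])
  rw [norm_mul, norm_pow]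
  exact mul_lt_one_of_nonneg_of_lt_one_right (pow_le_one₀ (norm_nonneg q) hq.le) (norm_nonneg z) hz

lemma differentiable_qPoch (hq : ‖q‖ < 1) : Differentiable ℂ fun z => qPoch z q := by
  intro z₀
  set K := Metric.ball (0 : ℂ) (‖z₀‖ + 1)
  have hprod : HasProdLocallyUniformlyOn (fun j z => 1 + -(q ^ j * z)) (fun z => qPoch z q) K := by
    simp_rw [qPoch, sub_eq_add_neg]
    refine ((summable_geometric_of_lt_one (norm_nonneg q) hq).mul_right
      (‖z₀‖ + 1)).hasProdLocallyUniformlyOn_nat_one_add Metric.isOpen_ball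
      (.of_forall fun j z hz => ?_) fun j => by fun_prop
    rw [norm_neg, norm_mul, norm_pow]
    exact mul_le_mul_of_nonneg_left (mem_ball_zero_iff.1 hz).le (by positivity)
  refine (hprod.differentiableOn (.of_forall fun t => ?_) Metric.isOpen_ball).differentiableAt
    (Metric.isOpen_ball.mem_nhds (by simp))
  simpa [Finset.prod_fn] using DifferentiableOn.finsetProd (fun _ _ => by fun_prop)

end QPochhammer

section JacobiTheta

variable {x : ℝ} {s : ℂ}

lemma norm_xpow_lt_one (hx : Real.log x < 0) {w : ℂ} (hw : 0 < w.re) : ‖xpow x w‖ < 1 := by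
  rw [xpow, norm_exp, Real.exp_lt_one_iff, re_mul_ofReal]
  exact mul_neg_of_pos_of_neg hw hx

lemma hasDerivAt_xpow (x : ℝ) (w : ℂ) : HasDerivAt (xpow x) (xpow x w * Real.log x) w :=
  (hasDerivAt_mul_const (Real.log x : ℂ)).cexp

lemma differentiable_xpow (x : ℝ) : Differentiable ℂ (xpow x) :=
  fun w => (hasDerivAt_xpow x w).differentiableAt

lemma xpow_zero (x : ℝ) : xpow x 0 = 1 := by simp [xpow]

lemma xpow_neg (x : ℝ) (w : ℂ) : xpow x (-w) = (xpow x w)⁻¹ := by simp [xpow, ← Complex.exp_neg]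

noncomputable def jThetaCofactor (x : ℝ) (s u : ℂ) : ℂ :=
  xpow x (u ^ 2 / s - u) *
    (qPoch (xpow x (2 * s) * xpow x (2 * u)) (xpow x (2 * s)) *
      qPoch (xpow x (2 * s) * xpow x (-(2 * u))) (xpow x (2 * s))) /
    qPoch (xpow x (2 * s)) (xpow x (2 * s)) ^ 2

lemma jTheta_eq_one_sub_xpow_mul (hq : ‖xpow x (2 * s)‖ < 1) (u : ℂ) :
    jTheta x s u = (1 - xpow x (2 * u)) * jThetaCofactor x s u := by
  have := qPoch_ne_zero hq hq
  rw [jTheta, jacTheta0, jThetaCofactor, qPoch_eq_one_sub_mul hq (xpow x (2 * u)), xpow_neg]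
  field_simp

lemma jThetaCofactor_zero (hq : ‖xpow x (2 * s)‖ < 1) : jThetaCofactor x s 0 = 1 := by
  have := qPoch_ne_zero hq hq
  simp [jThetaCofactor, xpow_zero, ← sq, this]

lemma differentiable_jThetaCofactor (hq : ‖xpow x (2 * s)‖ < 1) :
    Differentiable ℂ (jThetaCofactor x s) := by
  have hP := differentiable_qPoch hq
  have hX := differentiable_xpow x
  unfold jThetaCofactor
  fun_prop

lemma differentiable_jTheta (hq : ‖xpow x (2 * s)‖ < 1) : Differentiable ℂ (jTheta x s) := by
  have hX := differentiable_xpow x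
  rw [funext (jTheta_eq_one_sub_xpow_mul hq)]
  exact ((differentiable_const 1).sub (by fun_prop)).mul (differentiable_jThetaCofactor hq)

lemma jTheta_zero (hq : ‖xpow x (2 * s)‖ < 1) : jTheta x s 0 = 0 := by
  simp [jTheta_eq_one_sub_xpow_mul hq, xpow_zero]

lemma hasDerivAt_jTheta_zero (hq : ‖xpow x (2 * s)‖ < 1) :
    HasDerivAt (jTheta x s) (-(2 * Real.log x)) 0 := by
  have hlin : HasDerivAt (fun u => 1 - xpow x (2 * u)) (-(2 * Real.log x)) 0 := by
    refine (((hasDerivAt_xpow x (2 * 0)).comp 0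
      ((hasDerivAt_id 0).const_mul 2)).const_sub 1).congr_deriv ?_
    simp [xpow_zero, mul_comm]
  rw [funext (jTheta_eq_one_sub_xpow_mul hq)]
  refine (hlin.mul (differentiable_jThetaCofactor hq 0).hasDerivAt).congr_deriv ?_
  simp [xpow_zero, jThetaCofactor_zero hq]

end JacobiTheta

theorem stmt11_general (x : ℝ) (hx0 : 0 < x) (hx1 : x < 1) (s : ℂ) (hs : 0 < s.re) (r : ℂ)
    (h2 : jTheta x s r ≠ 0) :
    ∃ (g : ℂ → ℂ) (U : Set ℂ), IsOpen U ∧ (0 : ℂ) ∈ U ∧ DifferentiableOn ℂ g U ∧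
      ∀ u ∈ U, u ≠ 0 →
        g u =
          jTheta x s (u + 1) * jTheta x s (u + (r - 1)) /
              (jTheta x s u * jTheta x s (u + r)) +
            jTheta x s (-u + 1) * jTheta x s (-u + (r - 1)) /
              (jTheta x s (-u) * jTheta x s (-u + r)) := by
  have hlog : Real.log x < 0 := Real.log_neg hx0 hx1
  have hq : ‖xpow x (2 * s)‖ < 1 := norm_xpow_lt_one hlog (by simpa using hs)
  have hθ := differentiable_jTheta hq
  have hD : HasDerivAt (fun u => jTheta x s u * jTheta x s (u + r))
      (-(2 * Real.log x) * jTheta x s r) 0 := by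
    refine ((hasDerivAt_jTheta_zero hq).mul
      ((hθ (0 + r)).hasDerivAt.comp_add_const 0 r)).congr_deriv ?_
    simp [jTheta_zero hq]
  obtain ⟨g, hg, hgF⟩ := exists_analyticAt_eventuallyEq_div_add_div_neg
    (A := fun u => jTheta x s (u + 1) * jTheta x s (u + (r - 1)))
    (Differentiable.analyticAt (by fun_prop) 0) (Differentiable.analyticAt (by fun_prop) 0)
    (by simp [jTheta_zero hq])
    (hD.deriv ▸ mul_ne_zero (by simpa using hlog.ne) h2)
  exact ⟨g, hg.exists_isOpen_differentiableOn_eq hgF⟩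

theorem stmt11 (x : ℝ) (hx0 : 0 < x) (hx1 : x < 1) (s : ℂ) (hs : 0 < s.re) (r : ℂ)
    (h1 : jTheta x s 1 ≠ 0) (h2 : jTheta x s r ≠ 0) (h3 : jTheta x s (r - 1) ≠ 0) :
    ∃ (g : ℂ → ℂ) (U : Set ℂ), IsOpen U ∧ (0 : ℂ) ∈ U ∧ DifferentiableOn ℂ g U ∧
      ∀ u ∈ U, u ≠ 0 →
        g u =
          jTheta x s (u + 1) * jTheta x s (u + (r - 1)) /
              (jTheta x s u * jTheta x s (u + r)) +
            jTheta x s (-u + 1) * jTheta x s (-u + (r - 1)) /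
              (jTheta x s (-u) * jTheta x s (-u + r)) :=
  stmt11_general x hx0 hx1 s hs r h2
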